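/- For every integer n ≥ 1 and every integer j with 2 ≤ j and 3j − 1 ≤ n, one has p(i,j) ≤ C(2j−2, j−1)/2^(2j−1) for all 1 ≤ i ≤ n−j, with equality if and only if i = 2j−1 or i = 2j−2. In particular, max over 1 ≤ i ≤ n−j of p(i,j) equals C(2j−2, j−1)/2^(2j−1). -/

import Mathlib

/-!
Since `i ≤ n - j`, the second binomial in `p n i j` vanishes, so `2 p(i, j) = C(i-1, k) / 2^(i-1)`
with `k = j - 1`: the probability of exactly `k` heads in `i - 1` fair coin tosses. As a function
of the number `N` of tosses this grows while `N + 1 < 2k`, is stationary from `N = 2k - 1` to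
`N = 2k`, and decreases afterwards, because
`C(N + 1, k) / (2 C(N, k)) = (N + 1) / (2 (N + 1 - k))` for `k ≤ N`.
-/

/-- The transition probability of the one-time single-shelf shuffle: `p n i j` is the
probability that card `i` lands in position `j` in an `n`-card deck. -/
def p (n i j : ℕ) : ℚ :=
  ((Nat.choose (i - 1) (j - 1) : ℚ) + Nat.choose (i - 1) (n - j)) / 2 ^ i

namespace Nat

variable {n k : ℕ}

theorem two_mul_choose_lt_choose_succ (hk : k ≤ n) (hn : n + 1 < 2 * k) :
    2 * n.choose k < (n + 1).choose k := by
  refine Nat.lt_of_mul_lt_mul_right (a := n + 1 - k) ?_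
  rw [← choose_mul_succ_eq]
  calc 2 * n.choose k * (n + 1 - k) = n.choose k * (2 * (n + 1 - k)) := by ring
    _ < n.choose k * (n + 1) := Nat.mul_lt_mul_of_pos_left (by omega) (choose_pos hk)

theorem choose_succ_lt_two_mul_choose (hn : 2 * k ≤ n) :
    (n + 1).choose k < 2 * n.choose k := by
  refine Nat.lt_of_mul_lt_mul_right (a := n + 1 - k) ?_
  rw [← choose_mul_succ_eq]
  calc n.choose k * (n + 1) < n.choose k * (2 * (n + 1 - k)) :=
        Nat.mul_lt_mul_of_pos_left (by omega) (choose_pos (by omega))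
    _ = 2 * n.choose k * (n + 1 - k) := by ring

theorem choose_succ_eq_two_mul_choose (hn : n + 1 = 2 * k) :
    (n + 1).choose k = 2 * n.choose k := by
  refine Nat.eq_of_mul_eq_mul_right (m := n + 1 - k) (by omega) ?_
  rw [← choose_mul_succ_eq, hn, show 2 * k - k = k by omega]
  ring

end Nat

def binomHalf (n k : ℕ) : ℚ := n.choose k / 2 ^ n

section binomHalf

variable {n k : ℕ}

theorem binomHalf_eq_two_mul_div (n k : ℕ) : binomHalf n k = 2 * n.choose k / 2 ^ (n + 1) := by
  rw [binomHalf, pow_succ]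
  field_simp

theorem binomHalf_lt_binomHalf_succ (hk : k ≤ n) (hn : n + 1 < 2 * k) :
    binomHalf n k < binomHalf (n + 1) k := by
  rw [binomHalf_eq_two_mul_div, binomHalf]
  gcongr
  exact_mod_cast Nat.two_mul_choose_lt_choose_succ hk hn

theorem binomHalf_succ_lt_binomHalf (hn : 2 * k ≤ n) :
    binomHalf (n + 1) k < binomHalf n k := by
  rw [binomHalf_eq_two_mul_div n, binomHalf]
  gcongr
  exact_mod_cast Nat.choose_succ_lt_two_mul_choose hn

theorem binomHalf_succ_eq_binomHalf (hn : n + 1 = 2 * k) :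
    binomHalf (n + 1) k = binomHalf n k := by
  rw [binomHalf_eq_two_mul_div n, binomHalf, Nat.choose_succ_eq_two_mul_choose hn]
  push_cast
  rfl

theorem binomHalf_lt_binomHalf_two_mul (h₁ : n ≠ 2 * k) (h₂ : n + 1 ≠ 2 * k) :
    binomHalf n k < binomHalf (2 * k) k := by
  rcases lt_or_ge n k with hnk | hkn
  · have hpos : 0 < binomHalf (2 * k) k := by
      unfold binomHalf
      have := Nat.choose_pos (show k ≤ 2 * k by omega)
      positivity
    simpa [binomHalf, Nat.choose_eq_zero_of_lt hnk] using hpos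
  rcases lt_or_gt_of_ne h₁ with hlt | hgt
  · have hmono : StrictMonoOn (binomHalf · k) (Set.Icc k (2 * k - 1)) :=
      strictMonoOn_of_lt_succ Set.ordConnected_Icc fun a _ ha hsa ↦ by
        simp only [Order.succ_eq_add_one, Set.mem_Icc] at ha hsa ⊢
        exact binomHalf_lt_binomHalf_succ ha.1 (by omega)
    calc binomHalf n k < binomHalf (2 * k - 1) k :=
          hmono ⟨hkn, by omega⟩ ⟨by omega, le_rfl⟩ (by omega)
      _ = binomHalf (2 * k) k := by
          rw [← binomHalf_succ_eq_binomHalf (n := 2 * k - 1) (by omega)]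
          congr 1
          omega
  · exact Nat.rel_of_forall_rel_succ_of_le_of_lt (· > ·) (f := (binomHalf · k))
      (fun _ ha ↦ binomHalf_succ_lt_binomHalf ha) le_rfl hgt

theorem binomHalf_eq_binomHalf_two_mul_iff :
    binomHalf n k = binomHalf (2 * k) k ↔ n = 2 * k ∨ n + 1 = 2 * k := by
  refine ⟨fun h ↦ ?_, ?_⟩
  · by_contra! hne
    exact (binomHalf_lt_binomHalf_two_mul hne.1 hne.2).ne h
  · rintro (rfl | h)
    · rfl
    · rw [← binomHalf_succ_eq_binomHalf h, h]

theorem binomHalf_le_binomHalf_two_mul (n k : ℕ) : binomHalf n k ≤ binomHalf (2 * k) k := by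
  by_cases h : n = 2 * k ∨ n + 1 = 2 * k
  · exact (binomHalf_eq_binomHalf_two_mul_iff.mpr h).le
  · push Not at h
    exact (binomHalf_lt_binomHalf_two_mul h.1 h.2).le

end binomHalf

theorem p_eq_binomHalf_div_two {n i j : ℕ} (hi : i < n - j) :
    p n (i + 1) j = binomHalf i (j - 1) / 2 := by
  rw [p, Nat.add_sub_cancel, Nat.choose_eq_zero_of_lt hi, binomHalf, pow_succ, div_div]
  push_cast
  ring

theorem stmt10_general (n j : ℕ) (hj : 2 ≤ j)
    (i : ℕ) (hi1 : 1 ≤ i) (hin : i ≤ n - j) :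
    p n i j ≤ (Nat.choose (2 * j - 2) (j - 1) : ℚ) / 2 ^ (2 * j - 1) ∧
    (p n i j = (Nat.choose (2 * j - 2) (j - 1) : ℚ) / 2 ^ (2 * j - 1)
      ↔ i = 2 * j - 1 ∨ i = 2 * j - 2) := by
  obtain ⟨k, rfl⟩ : ∃ k, j = k + 1 := ⟨j - 1, by omega⟩
  obtain ⟨N, rfl⟩ : ∃ N, i = N + 1 := ⟨i - 1, by omega⟩
  have hmax : (Nat.choose (2 * (k + 1) - 2) (k + 1 - 1) : ℚ) / 2 ^ (2 * (k + 1) - 1)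
      = binomHalf (2 * k) k / 2 := by
    rw [binomHalf, div_div, ← pow_succ, show 2 * (k + 1) - 2 = 2 * k by omega,
      show 2 * (k + 1) - 1 = 2 * k + 1 by omega, Nat.add_sub_cancel]
  rw [p_eq_binomHalf_div_two (by omega), hmax, Nat.add_sub_cancel,
    div_le_div_iff_of_pos_right two_pos, div_left_inj' two_ne_zero,
    binomHalf_eq_binomHalf_two_mul_iff]
  exact ⟨binomHalf_le_binomHalf_two_mul N k, by omega⟩

theorem stmt10 (n j : ℕ) (hn : 1 ≤ n) (hj : 2 ≤ j) (hjn : 3 * j - 1 ≤ n)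
    (i : ℕ) (hi1 : 1 ≤ i) (hin : i ≤ n - j) :
    p n i j ≤ (Nat.choose (2 * j - 2) (j - 1) : ℚ) / 2 ^ (2 * j - 1) ∧
    (p n i j = (Nat.choose (2 * j - 2) (j - 1) : ℚ) / 2 ^ (2 * j - 1)
      ↔ i = 2 * j - 1 ∨ i = 2 * j - 2) :=
  stmt10_general n j hj i hi1 hin
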